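/- The function Δ₆ has zeros along the negative real axis at the points σ = −2n (for every natural number n ≥ 1) and σ = −2n − 1/2 (for every natural number n ≥ 0); precisely, for each such point s₀, Δ₆(s) tends to 0 as s tends to s₀ within ℂ \ {s₀} (the punctured neighbourhood filter 𝓝[≠] s₀). -/
import Mathlib

open Filter

noncomputable def D (s : ℂ) : ℂ :=
  ((Real.pi ^ (-(1/4) : ℝ) : ℝ) * Complex.Gamma s +
    (Real.pi ^ ((1/4) : ℝ) : ℝ) * Complex.Gamma (s - 1/2)) / Complex.Gamma (s - 1/4)

noncomputable def Δ₆ (s : ℂ) : ℂ :=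
  (completedRiemannZeta (2 * s) + completedRiemannZeta (2 * s - 1)) /
    (completedRiemannZeta (2 * s - 1/2) * D s)

lemma Lambda_ne_zero_of_re_neg {s : ℂ} (hs : s.re < 0) : completedRiemannZeta s ≠ 0 := by
  intro h
  have h1 : completedRiemannZeta (1 - s) = 0 := by rw [completedRiemannZeta_one_sub]; exact h
  have hre : 1 < (1 - s).re := by
    simp only [Complex.sub_re, Complex.one_re]; linarith
  have hz := riemannZeta_ne_zero_of_one_lt_re hre
  have hne : (1 : ℂ) - s ≠ 0 := by
    intro h0; rw [h0] at hre; simp only [Complex.zero_re] at hre; norm_num at hre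
  rw [riemannZeta_def_of_ne_zero hne, h1, zero_div] at hz
  exact hz rfl

lemma eventually_Gamma_shift_ne (s₀ c : ℂ) (k : ℕ) (hk : s₀ - c = -(k : ℂ)) :
    ∀ᶠ s in nhdsWithin s₀ {s₀}ᶜ, Complex.Gamma (s - c) ≠ 0 := by
  have hball : ∀ᶠ s in nhdsWithin s₀ {s₀}ᶜ, s ∈ Metric.ball s₀ 2⁻¹ ∧ s ≠ s₀ := by
    filter_upwards [nhdsWithin_le_nhds (Metric.ball_mem_nhds s₀ (by norm_num : (0:ℝ) < 2⁻¹)),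
      self_mem_nhdsWithin] with s h1 h2
    exact ⟨h1, h2⟩
  filter_upwards [hball] with s hs
  refine Complex.Gamma_ne_zero fun m hm => ?_
  have hss : s - s₀ = (((k : ℤ) - m : ℤ) : ℂ) := by push_cast; linear_combination hm - hk
  have hne : ((k : ℤ) - m) ≠ 0 := by
    intro h0
    apply hs.2
    have h3 : s - s₀ = 0 := by rw [hss, h0]; simp
    exact sub_eq_zero.mp h3
  have h1 : (1 : ℝ) ≤ ‖s - s₀‖ := by
    rw [hss, Complex.norm_intCast]
    exact_mod_cast Int.one_le_abs hne
  have h2 : ‖s - s₀‖ < 2⁻¹ := by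
    exact mem_ball_iff_norm.mp hs.1
  linarith

lemma aux_alg (a b G0 G2 : ℂ) (h1 : G0 ≠ 0) :
    a + b * G2 * G0⁻¹ = (a * G0 + b * G2) * G0⁻¹ := by field_simp

lemma aux_alg2 (a b G0 G2 : ℂ) (h1 : G0 ≠ 0) :
    a * G0 + b * G2 = (a + b * G2 * G0⁻¹) * G0 := by field_simp

lemma aux_div (N L3 G0 G2 G4 a b : ℂ) (h1 : G0 ≠ 0) (h3 : G4 ≠ 0) (h2 : L3 ≠ 0)
    (hX : a * G0 + b * G2 ≠ 0) :
    N / (L3 * ((a * G0 + b * G2) / G4)) = N * G4 * G0⁻¹ / (L3 * (a + b * G2 * G0⁻¹)) := by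
  rw [aux_alg a b G0 G2 h1]
  field_simp

lemma aux_alg2' (a b G0 G2 : ℂ) (h1 : G2 ≠ 0) :
    a * G0 + b * G2 = (a * G0 * G2⁻¹ + b) * G2 := by field_simp

lemma aux_div' (N L3 G0 G2 G4 a b : ℂ) (h1 : G2 ≠ 0) (h3 : G4 ≠ 0) (h2 : L3 ≠ 0)
    (hX : a * G0 + b * G2 ≠ 0) :
    N / (L3 * ((a * G0 + b * G2) / G4)) = N * G4 * G2⁻¹ / (L3 * (a * G0 * G2⁻¹ + b)) := by
  rw [aux_alg2' a b G0 G2 h1]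
  field_simp

set_option maxHeartbeats 1000000 in
lemma Delta6_case1 (n : ℕ) (hn : 1 ≤ n) :
    Tendsto Δ₆ (nhdsWithin (-(2 * n) : ℂ) {(-(2 * n) : ℂ)}ᶜ) (nhds 0) := by
  set s₀ : ℂ := -(2 * n) with hs₀def
  set a : ℂ := ((Real.pi ^ (-(1/4) : ℝ) : ℝ) : ℂ) with hadef
  set b : ℂ := ((Real.pi ^ ((1/4) : ℝ) : ℝ) : ℂ) with hbdef
  have ha : a ≠ 0 := Complex.ofReal_ne_zero.mpr (Real.rpow_pos_of_pos Real.pi_pos _).ne'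
  have hb : b ≠ 0 := Complex.ofReal_ne_zero.mpr (Real.rpow_pos_of_pos Real.pi_pos _).ne'
  have hnR : (1 : ℝ) ≤ (n : ℝ) := by exact_mod_cast hn
  have h20 : 2 * s₀ ≠ 0 := by
    rw [hs₀def]; intro h
    have : ((4 * n : ℝ) : ℂ) = 0 := by push_cast; linear_combination -h
    rw [Complex.ofReal_eq_zero] at this; linarith
  have h21 : 2 * s₀ ≠ 1 := by
    rw [hs₀def]; intro h
    have : ((-(4 * n) : ℝ) : ℂ) = ((1 : ℝ) : ℂ) := by push_cast; linear_combination h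
    rw [Complex.ofReal_inj] at this; linarith
  have h30 : 2 * s₀ - 1 ≠ 0 := by
    rw [hs₀def]; intro h
    have : ((-(4 * n) - 1 : ℝ) : ℂ) = ((0 : ℝ) : ℂ) := by push_cast; linear_combination h
    rw [Complex.ofReal_inj] at this; linarith
  have h31 : 2 * s₀ - 1 ≠ 1 := by
    rw [hs₀def]; intro h
    have : ((-(4 * n) - 1 : ℝ) : ℂ) = ((1 : ℝ) : ℂ) := by push_cast; linear_combination h
    rw [Complex.ofReal_inj] at this; linarith
  have h50 : 2 * s₀ - 1/2 ≠ 0 := by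
    rw [hs₀def]; intro h
    have : ((-(4 * n) - 1/2 : ℝ) : ℂ) = ((0 : ℝ) : ℂ) := by push_cast; linear_combination h
    rw [Complex.ofReal_inj] at this; linarith
  have h51 : 2 * s₀ - 1/2 ≠ 1 := by
    rw [hs₀def]; intro h
    have : ((-(4 * n) - 1/2 : ℝ) : ℂ) = ((1 : ℝ) : ℂ) := by push_cast; linear_combination h
    rw [Complex.ofReal_inj] at this; linarith
  have hG0 : Complex.Gamma s₀ = 0 := by
    have := Complex.Gamma_neg_nat_eq_zero (2 * n)
    rw [hs₀def]; push_cast at this ⊢; exact this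
  have hΛne : completedRiemannZeta (2 * s₀ - 1/2) ≠ 0 := by
    apply Lambda_ne_zero_of_re_neg
    rw [hs₀def]
    have : (2 : ℂ) * -(2 * n) - 1/2 = ((-(4*n) - 1/2 : ℝ) : ℂ) := by push_cast; ring
    rw [this, Complex.ofReal_re]; linarith
  have h4 : ∀ m : ℕ, s₀ - 1/4 ≠ -(m : ℂ) := by
    intro m h
    have : ((-(2*n) - 1/4 : ℝ) : ℂ) = ((-(m:ℝ) : ℝ) : ℂ) := by
      rw [hs₀def] at h; push_cast; linear_combination h
    rw [Complex.ofReal_inj] at this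
    have h8 : (8 * n + 1 : ℝ) = 4 * m := by linarith
    have h8' : (8 * n + 1 : ℕ) = 4 * m := by exact_mod_cast h8
    omega
  have h12 : ∀ m : ℕ, s₀ - 1/2 ≠ -(m : ℂ) := by
    intro m h
    have : ((-(2*n) - 1/2 : ℝ) : ℂ) = ((-(m:ℝ) : ℝ) : ℂ) := by
      rw [hs₀def] at h; push_cast; linear_combination h
    rw [Complex.ofReal_inj] at this
    have h8 : (4 * n + 1 : ℝ) = 2 * m := by linarith
    have h8' : (4 * n + 1 : ℕ) = 2 * m := by exact_mod_cast h8
    omega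
  -- continuity facts
  have cΛ1 : ContinuousAt (fun s : ℂ => completedRiemannZeta (2 * s)) s₀ :=
    ContinuousAt.comp (f := fun s : ℂ => 2 * s)
      (differentiableAt_completedZeta h20 h21).continuousAt (by fun_prop)
  have cΛ2 : ContinuousAt (fun s : ℂ => completedRiemannZeta (2 * s - 1)) s₀ :=
    ContinuousAt.comp (f := fun s : ℂ => 2 * s - 1)
      (differentiableAt_completedZeta h30 h31).continuousAt (by fun_prop)
  have cΛ3 : ContinuousAt (fun s : ℂ => completedRiemannZeta (2 * s - 1/2)) s₀ :=
    ContinuousAt.comp (f := fun s : ℂ => 2 * s - 1/2)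
      (differentiableAt_completedZeta h50 h51).continuousAt (by fun_prop)
  have cG4 : ContinuousAt (fun s : ℂ => Complex.Gamma (s - 1/4)) s₀ :=
    ContinuousAt.comp (f := fun s : ℂ => s - 1/4)
      (Complex.differentiableAt_Gamma _ h4).continuousAt (by fun_prop)
  have cG2 : ContinuousAt (fun s : ℂ => Complex.Gamma (s - 1/2)) s₀ :=
    ContinuousAt.comp (f := fun s : ℂ => s - 1/2)
      (Complex.differentiableAt_Gamma _ h12).continuousAt (by fun_prop)
  have cGi : ContinuousAt (fun s : ℂ => (Complex.Gamma s)⁻¹) s₀ :=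
    Complex.differentiable_one_div_Gamma.continuous.continuousAt
  -- eventual facts
  have ev1 : ∀ᶠ s in nhdsWithin s₀ {s₀}ᶜ, Complex.Gamma s ≠ 0 := by
    have := eventually_Gamma_shift_ne s₀ 0 (2 * n) (by rw [hs₀def]; push_cast; ring)
    simpa using this
  have ev2 : ∀ᶠ s in nhdsWithin s₀ {s₀}ᶜ, completedRiemannZeta (2 * s - 1/2) ≠ 0 :=
    (cΛ3.eventually_ne hΛne).filter_mono nhdsWithin_le_nhds
  have ev3 : ∀ᶠ s in nhdsWithin s₀ {s₀}ᶜ, Complex.Gamma (s - 1/4) ≠ 0 :=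
    (cG4.eventually_ne (Complex.Gamma_ne_zero h4)).filter_mono nhdsWithin_le_nhds
  have cden2 : ContinuousAt
      (fun s : ℂ => a + b * Complex.Gamma (s - 1/2) * (Complex.Gamma s)⁻¹) s₀ :=
    continuousAt_const.add ((continuousAt_const.mul cG2).mul cGi)
  have hval : a + b * Complex.Gamma (s₀ - 1/2) * (Complex.Gamma s₀)⁻¹ = a := by
    rw [hG0]; simp
  have ev4 : ∀ᶠ s in nhdsWithin s₀ {s₀}ᶜ,
      a + b * Complex.Gamma (s - 1/2) * (Complex.Gamma s)⁻¹ ≠ 0 :=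
    (cden2.eventually_ne (by rw [hval]; exact ha)).filter_mono nhdsWithin_le_nhds
  -- limits
  have hnum : Tendsto (fun s : ℂ =>
      (completedRiemannZeta (2 * s) + completedRiemannZeta (2 * s - 1)) *
        Complex.Gamma (s - 1/4) * (Complex.Gamma s)⁻¹)
      (nhdsWithin s₀ {s₀}ᶜ) (nhds 0) := by
    have hc : ContinuousAt (fun s : ℂ =>
        (completedRiemannZeta (2 * s) + completedRiemannZeta (2 * s - 1)) *
          Complex.Gamma (s - 1/4) * (Complex.Gamma s)⁻¹) s₀ :=
      ((cΛ1.add cΛ2).mul cG4).mul cGi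
    have ht := hc.tendsto.mono_left (nhdsWithin_le_nhds (s := {s₀}ᶜ))
    simpa [hG0] using ht
  have hden : Tendsto (fun s : ℂ =>
      completedRiemannZeta (2 * s - 1/2) *
        (a + b * Complex.Gamma (s - 1/2) * (Complex.Gamma s)⁻¹))
      (nhdsWithin s₀ {s₀}ᶜ) (nhds (completedRiemannZeta (2 * s₀ - 1/2) * a)) := by
    have hc : ContinuousAt (fun s : ℂ => completedRiemannZeta (2 * s - 1/2) *
        (a + b * Complex.Gamma (s - 1/2) * (Complex.Gamma s)⁻¹)) s₀ := cΛ3.mul cden2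
    have ht := hc.tendsto.mono_left (nhdsWithin_le_nhds (s := {s₀}ᶜ))
    rw [hval] at ht
    exact ht
  have hlim := hnum.div hden (mul_ne_zero hΛne ha)
  rw [zero_div] at hlim
  refine Tendsto.congr' ?_ hlim
  filter_upwards [ev1, ev2, ev3, ev4] with s h1 h2 h3 h4'
  have hX : a * Complex.Gamma s + b * Complex.Gamma (s - 1/2) ≠ 0 := by
    rw [aux_alg2 a b (Complex.Gamma s) (Complex.Gamma (s - 1/2)) h1]
    exact mul_ne_zero h4' h1
  show _ = Δ₆ s
  unfold Δ₆ D
  rw [← hadef, ← hbdef]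
  simp only [Pi.div_apply]
  exact (aux_div _ _ _ _ _ _ _ h1 h3 h2 hX).symm

set_option maxHeartbeats 1000000 in
lemma Delta6_case2 (n : ℕ) :
    Tendsto Δ₆ (nhdsWithin (-(2 * n) - 1/2 : ℂ) {(-(2 * n) - 1/2 : ℂ)}ᶜ) (nhds 0) := by
  set s₀ : ℂ := -(2 * n) - 1/2 with hs₀def
  set a : ℂ := ((Real.pi ^ (-(1/4) : ℝ) : ℝ) : ℂ) with hadef
  set b : ℂ := ((Real.pi ^ ((1/4) : ℝ) : ℝ) : ℂ) with hbdef
  have ha : a ≠ 0 := Complex.ofReal_ne_zero.mpr (Real.rpow_pos_of_pos Real.pi_pos _).ne'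
  have hb : b ≠ 0 := Complex.ofReal_ne_zero.mpr (Real.rpow_pos_of_pos Real.pi_pos _).ne'
  have hnR : (0 : ℝ) ≤ (n : ℝ) := Nat.cast_nonneg n
  have h20 : 2 * s₀ ≠ 0 := by
    rw [hs₀def]; intro h
    have : ((-(4 * n) - 1 : ℝ) : ℂ) = ((0 : ℝ) : ℂ) := by push_cast; linear_combination h
    rw [Complex.ofReal_inj] at this; linarith
  have h21 : 2 * s₀ ≠ 1 := by
    rw [hs₀def]; intro h
    have : ((-(4 * n) - 1 : ℝ) : ℂ) = ((1 : ℝ) : ℂ) := by push_cast; linear_combination h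
    rw [Complex.ofReal_inj] at this; linarith
  have h30 : 2 * s₀ - 1 ≠ 0 := by
    rw [hs₀def]; intro h
    have : ((-(4 * n) - 2 : ℝ) : ℂ) = ((0 : ℝ) : ℂ) := by push_cast; linear_combination h
    rw [Complex.ofReal_inj] at this; linarith
  have h31 : 2 * s₀ - 1 ≠ 1 := by
    rw [hs₀def]; intro h
    have : ((-(4 * n) - 2 : ℝ) : ℂ) = ((1 : ℝ) : ℂ) := by push_cast; linear_combination h
    rw [Complex.ofReal_inj] at this; linarith
  have h50 : 2 * s₀ - 1/2 ≠ 0 := by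
    rw [hs₀def]; intro h
    have : ((-(4 * n) - 3/2 : ℝ) : ℂ) = ((0 : ℝ) : ℂ) := by push_cast; linear_combination h
    rw [Complex.ofReal_inj] at this; linarith
  have h51 : 2 * s₀ - 1/2 ≠ 1 := by
    rw [hs₀def]; intro h
    have : ((-(4 * n) - 3/2 : ℝ) : ℂ) = ((1 : ℝ) : ℂ) := by push_cast; linear_combination h
    rw [Complex.ofReal_inj] at this; linarith
  have hG2 : Complex.Gamma (s₀ - 1/2) = 0 := by
    have := Complex.Gamma_neg_nat_eq_zero (2 * n + 1)
    rw [hs₀def]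
    have heq : -(2 * (n:ℂ)) - 1/2 - 1/2 = -((2 * n + 1 : ℕ) : ℂ) := by push_cast; ring
    rw [heq]; exact this
  have hΛne : completedRiemannZeta (2 * s₀ - 1/2) ≠ 0 := by
    apply Lambda_ne_zero_of_re_neg
    rw [hs₀def]
    have : (2 : ℂ) * (-(2 * n) - 1/2) - 1/2 = ((-(4*n) - 3/2 : ℝ) : ℂ) := by push_cast; ring
    rw [this, Complex.ofReal_re]; linarith
  have h4 : ∀ m : ℕ, s₀ - 1/4 ≠ -(m : ℂ) := by
    intro m h
    have : ((-(2*n) - 3/4 : ℝ) : ℂ) = ((-(m:ℝ) : ℝ) : ℂ) := by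
      rw [hs₀def] at h; push_cast; linear_combination h
    rw [Complex.ofReal_inj] at this
    have h8 : (8 * n + 3 : ℝ) = 4 * m := by linarith
    have h8' : (8 * n + 3 : ℕ) = 4 * m := by exact_mod_cast h8
    omega
  have h12 : ∀ m : ℕ, s₀ ≠ -(m : ℂ) := by
    intro m h
    have : ((-(2*n) - 1/2 : ℝ) : ℂ) = ((-(m:ℝ) : ℝ) : ℂ) := by
      rw [hs₀def] at h; push_cast; linear_combination h
    rw [Complex.ofReal_inj] at this
    have h8 : (4 * n + 1 : ℝ) = 2 * m := by linarith
    have h8' : (4 * n + 1 : ℕ) = 2 * m := by exact_mod_cast h8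
    omega
  -- continuity facts
  have cΛ1 : ContinuousAt (fun s : ℂ => completedRiemannZeta (2 * s)) s₀ :=
    ContinuousAt.comp (f := fun s : ℂ => 2 * s)
      (differentiableAt_completedZeta h20 h21).continuousAt (by fun_prop)
  have cΛ2 : ContinuousAt (fun s : ℂ => completedRiemannZeta (2 * s - 1)) s₀ :=
    ContinuousAt.comp (f := fun s : ℂ => 2 * s - 1)
      (differentiableAt_completedZeta h30 h31).continuousAt (by fun_prop)
  have cΛ3 : ContinuousAt (fun s : ℂ => completedRiemannZeta (2 * s - 1/2)) s₀ :=
    ContinuousAt.comp (f := fun s : ℂ => 2 * s - 1/2)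
      (differentiableAt_completedZeta h50 h51).continuousAt (by fun_prop)
  have cG4 : ContinuousAt (fun s : ℂ => Complex.Gamma (s - 1/4)) s₀ :=
    ContinuousAt.comp (f := fun s : ℂ => s - 1/4)
      (Complex.differentiableAt_Gamma _ h4).continuousAt (by fun_prop)
  have cG0 : ContinuousAt Complex.Gamma s₀ :=
    (Complex.differentiableAt_Gamma _ h12).continuousAt
  have cGi : ContinuousAt (fun s : ℂ => (Complex.Gamma (s - 1/2))⁻¹) s₀ :=
    ContinuousAt.comp (f := fun s : ℂ => s - 1/2)
      Complex.differentiable_one_div_Gamma.continuous.continuousAt (by fun_prop)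
  -- eventual facts
  have ev1 : ∀ᶠ s in nhdsWithin s₀ {s₀}ᶜ, Complex.Gamma (s - 1/2) ≠ 0 :=
    eventually_Gamma_shift_ne s₀ (1/2) (2 * n + 1) (by rw [hs₀def]; push_cast; ring)
  have ev2 : ∀ᶠ s in nhdsWithin s₀ {s₀}ᶜ, completedRiemannZeta (2 * s - 1/2) ≠ 0 :=
    (cΛ3.eventually_ne hΛne).filter_mono nhdsWithin_le_nhds
  have ev3 : ∀ᶠ s in nhdsWithin s₀ {s₀}ᶜ, Complex.Gamma (s - 1/4) ≠ 0 :=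
    (cG4.eventually_ne (Complex.Gamma_ne_zero h4)).filter_mono nhdsWithin_le_nhds
  have cden2 : ContinuousAt
      (fun s : ℂ => a * Complex.Gamma s * (Complex.Gamma (s - 1/2))⁻¹ + b) s₀ :=
    (((continuousAt_const.mul cG0).mul cGi)).add continuousAt_const
  have hval : a * Complex.Gamma s₀ * (Complex.Gamma (s₀ - 1/2))⁻¹ + b = b := by
    rw [hG2]; simp
  have ev4 : ∀ᶠ s in nhdsWithin s₀ {s₀}ᶜ,
      a * Complex.Gamma s * (Complex.Gamma (s - 1/2))⁻¹ + b ≠ 0 :=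
    (cden2.eventually_ne (by rw [hval]; exact hb)).filter_mono nhdsWithin_le_nhds
  -- limits
  have hnum : Tendsto (fun s : ℂ =>
      (completedRiemannZeta (2 * s) + completedRiemannZeta (2 * s - 1)) *
        Complex.Gamma (s - 1/4) * (Complex.Gamma (s - 1/2))⁻¹)
      (nhdsWithin s₀ {s₀}ᶜ) (nhds 0) := by
    have hc : ContinuousAt (fun s : ℂ =>
        (completedRiemannZeta (2 * s) + completedRiemannZeta (2 * s - 1)) *
          Complex.Gamma (s - 1/4) * (Complex.Gamma (s - 1/2))⁻¹) s₀ :=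
      ((cΛ1.add cΛ2).mul cG4).mul cGi
    have ht := hc.tendsto.mono_left (nhdsWithin_le_nhds (s := {s₀}ᶜ))
    have hv : (completedRiemannZeta (2 * s₀) + completedRiemannZeta (2 * s₀ - 1)) *
        Complex.Gamma (s₀ - 1/4) * (Complex.Gamma (s₀ - 1/2))⁻¹ = 0 := by
      rw [hG2, inv_zero, mul_zero]
    rw [hv] at ht; exact ht
  have hden : Tendsto (fun s : ℂ =>
      completedRiemannZeta (2 * s - 1/2) *
        (a * Complex.Gamma s * (Complex.Gamma (s - 1/2))⁻¹ + b))
      (nhdsWithin s₀ {s₀}ᶜ) (nhds (completedRiemannZeta (2 * s₀ - 1/2) * b)) := by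
    have hc : ContinuousAt (fun s : ℂ => completedRiemannZeta (2 * s - 1/2) *
        (a * Complex.Gamma s * (Complex.Gamma (s - 1/2))⁻¹ + b)) s₀ := cΛ3.mul cden2
    have ht := hc.tendsto.mono_left (nhdsWithin_le_nhds (s := {s₀}ᶜ))
    rw [hval] at ht
    exact ht
  have hlim := hnum.div hden (mul_ne_zero hΛne hb)
  rw [zero_div] at hlim
  refine Tendsto.congr' ?_ hlim
  filter_upwards [ev1, ev2, ev3, ev4] with s h1 h2 h3 h4'
  have hX : a * Complex.Gamma s + b * Complex.Gamma (s - 1/2) ≠ 0 := by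
    rw [aux_alg2' a b (Complex.Gamma s) (Complex.Gamma (s - 1/2)) h1]
    exact mul_ne_zero h4' h1
  show _ = Δ₆ s
  unfold Δ₆ D
  rw [← hadef, ← hbdef]
  simp only [Pi.div_apply]
  exact (aux_div' _ _ _ _ _ _ _ h1 h3 h2 hX).symm

theorem Delta6_zeros_negative_real_axis (n : ℕ) :
    (1 ≤ n → Tendsto Δ₆ (nhdsWithin (-(2 * n) : ℂ) {(-(2 * n) : ℂ)}ᶜ) (nhds 0)) ∧
    Tendsto Δ₆ (nhdsWithin (-(2 * n) - 1/2 : ℂ) {(-(2 * n) - 1/2 : ℂ)}ᶜ) (nhds 0) :=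
  ⟨fun hn => Delta6_case1 n hn, Delta6_case2 n⟩
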